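/- Let D be a 0–1 dataset with M rows satisfying the constraint system of the Hamiltonian-cycle reduction for a graph G on Fin M, and let σ be its induced cyclic ordering (σ(i) = the unique j such that some row contains a 1 in both o_i and v_j). If P = {j,k} is a non-edge of G, then there is no i ∈ Fin M with {σ(i), σ(i+1 mod M)} = {j,k}; that is, the columns b_i and c_P are never equal as 0–1 vectors, so every cyclically consecutive pair of the induced ordering is an edge of G. -/

import Mathlib

/-! The row carrying `s_{i,P}` has a 1 in `b_i` and a 0 in `c_P`, so for a non-edge `P` the
columns `b_i` and `c_P` differ. But if `{σ i, σ (i+1)} = P`, both columns have their two 1s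
exactly in the rows of `o_i` and `o_{i+1}`: `b_i` by its own constraints, `c_P` because these
rows carry `v_{σ i}` and `v_{σ (i+1)}`. Finally `σ` is injective, because distinct `o` columns
never share a row, so consecutive values `σ i ≠ σ (i+1)` form a pair that must be an edge. -/

/-- The columns of the Hamiltonian-cycle reduction constraint system for a graph
`G` on `Fin M`: groups `O`, `V`, `B` indexed by `Fin M`, group `C` indexed by
unordered pairs of distinct vertices, and groups `S`, `E` indexed by pairs
`(i, P)` with `i ∈ Fin M` and `P` a non-edge of `G`. -/
inductive Col (M : ℕ) (G : SimpleGraph (Fin M)) : Type where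
  | o : Fin M → Col M G
  | v : Fin M → Col M G
  | b : Fin M → Col M G
  | c : {P : Sym2 (Fin M) // ¬ P.IsDiag} → Col M G
  | s : Fin M → {P : Sym2 (Fin M) // ¬ P.IsDiag ∧ P ∉ G.edgeSet} → Col M G
  | e : Fin M → {P : Sym2 (Fin M) // ¬ P.IsDiag ∧ P ∉ G.edgeSet} → Col M G

/-- The frequency of the singleton itemset `{x}` in the dataset `D`:
the number of rows having a 1 in column `x`. -/
noncomputable def fr1 {M : ℕ} {α : Type*} (D : Fin M → α → Bool) (x : α) : ℕ :=
  Nat.card {t : Fin M // D t x = true}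

/-- The frequency of the two-element itemset `{x, y}` in the dataset `D`:
the number of rows having a 1 in both columns `x` and `y`. -/
noncomputable def fr2 {M : ℕ} {α : Type*} (D : Fin M → α → Bool) (x y : α) : ℕ :=
  Nat.card {t : Fin M // D t x = true ∧ D t y = true}

/-- A 0–1 dataset `D` with `M` rows satisfies the itemset frequency constraints of
the Hamiltonian-cycle reduction for `G` (indices of the `b` columns taken mod `M`). -/
def Satisfies (M : ℕ) [NeZero M] (G : SimpleGraph (Fin M)) (D : Fin M → Col M G → Bool) : Prop :=
  (∀ i, fr1 D (Col.o i) = 1) ∧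
  (∀ i j, i ≠ j → fr2 D (Col.o i) (Col.o j) = 0) ∧
  (∀ i, fr1 D (Col.v i) = 1) ∧
  (∀ i j, i ≠ j → fr2 D (Col.v i) (Col.v j) = 0) ∧
  (∀ i, fr1 D (Col.b i) = 2) ∧
  (∀ i, fr2 D (Col.b i) (Col.o i) = 1) ∧
  (∀ i, fr2 D (Col.b i) (Col.o (i + 1)) = 1) ∧
  (∀ P, fr1 D (Col.c P) = 2) ∧
  (∀ (P : {P : Sym2 (Fin M) // ¬ P.IsDiag}) (j : Fin M),
      j ∈ P.val → fr2 D (Col.c P) (Col.v j) = 1) ∧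
  (∀ i P, fr1 D (Col.s i P) = 1) ∧
  (∀ i P, fr2 D (Col.s i P) (Col.b i) = 1) ∧
  (∀ (i : Fin M) (P : {P : Sym2 (Fin M) // ¬ P.IsDiag ∧ P ∉ G.edgeSet}),
      fr2 D (Col.s i P) (Col.c ⟨P.val, P.prop.1⟩) = 0) ∧
  (∀ i P, fr1 D (Col.e i P) = M - 1) ∧
  (∀ i P, fr2 D (Col.s i P) (Col.e i P) = 0)

section Frequency

open Finset

variable {M : ℕ} {α : Type*} (D : Fin M → α → Bool) (x y : α)

lemma fr1_eq_card_filter : fr1 D x = #{t | D t x = true} := by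
  rw [fr1, Nat.card_eq_fintype_card, Fintype.card_subtype]

lemma fr2_eq_card_filter : fr2 D x y = #{t | D t x = true ∧ D t y = true} := by
  rw [fr2, Nat.card_eq_fintype_card, Fintype.card_subtype]

lemma fr1_le : fr1 D x ≤ M :=
  (Finite.card_subtype_le _).trans_eq (Nat.card_fin M)

variable {D x y}

lemma eq_of_fr1_eq_one (h : fr1 D x = 1) {t t' : Fin M}
    (ht : D t x = true) (ht' : D t' x = true) : t = t' :=
  have := (Nat.card_eq_one_iff_unique.mp h).1
  congrArg Subtype.val (Subsingleton.elim (⟨t, ht⟩ : {t // D t x = true}) ⟨t', ht'⟩)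

lemma not_and_of_fr2_eq_zero (h : fr2 D x y = 0) (t : Fin M) :
    ¬ (D t x = true ∧ D t y = true) :=
  fun ht => (Finite.card_eq_zero_iff.mp h).false ⟨t, ht⟩

lemma exists_of_fr2_ne_zero (h : fr2 D x y ≠ 0) : ∃ t, D t x = true ∧ D t y = true :=
  let ⟨t⟩ := (Nat.card_ne_zero.mp h).1
  ⟨t.1, t.2⟩

lemma apply_eq_true_of_fr2_eq_fr1 (h : fr2 D x y = fr1 D y) {t : Fin M}
    (ht : D t y = true) : D t x = true := by
  rw [fr2_eq_card_filter, fr1_eq_card_filter] at h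
  have hsub : ({t | D t x = true ∧ D t y = true} : Finset (Fin M)) ⊆
      ({t | D t y = true} : Finset (Fin M)) :=
    monotone_filter_right _ fun _ _ => And.right
  have heq := eq_of_subset_of_card_le hsub h.ge
  have hmem : t ∈ ({t | D t y = true} : Finset (Fin M)) := by simpa using ht
  rw [← heq] at hmem
  exact (mem_filter.mp hmem).2.1

lemma filter_eq_pair_of_fr1_eq_two (h : fr1 D x = 2) {a b : Fin M} (hab : a ≠ b)
    (ha : D a x = true) (hb : D b x = true) : ({t | D t x = true} : Finset (Fin M)) = {a, b} := by
  have hsub : ({a, b} : Finset (Fin M)) ⊆ ({t | D t x = true} : Finset (Fin M)) := by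
    simp [insert_subset_iff, ha, hb]
  refine (eq_of_subset_of_card_le hsub ?_).symm
  rw [← fr1_eq_card_filter, h, card_pair hab]

lemma column_eq_of_fr1_eq_two (hx : fr1 D x = 2) (hy : fr1 D y = 2) {a b : Fin M} (hab : a ≠ b)
    (hxa : D a x = true) (hxb : D b x = true) (hya : D a y = true) (hyb : D b y = true) :
    (fun t => D t x) = (fun t => D t y) := by
  have heq := (filter_eq_pair_of_fr1_eq_two hx hab hxa hxb).trans
    (filter_eq_pair_of_fr1_eq_two hy hab hya hyb).symm
  funext t
  simpa using congrArg (t ∈ ·) heq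

end Frequency

namespace Satisfies

variable {M : ℕ} [NeZero M] {G : SimpleGraph (Fin M)} {D : Fin M → Col M G → Bool}

lemma two_le (hD : Satisfies M G D) : 2 ≤ M := by
  obtain ⟨-, -, -, -, hb1, -⟩ := hD
  exact hb1 0 ▸ fr1_le D (Col.b 0)

lemma ne_add_one (hD : Satisfies M G D) (i : Fin M) : i ≠ i + 1 :=
  left_ne_add.mpr (Fin.one_eq_zero_iff.not.mpr (by have := hD.two_le; omega))

lemma col_b_ne_col_c (hD : Satisfies M G D) (i : Fin M)
    (P : {P : Sym2 (Fin M) // ¬ P.IsDiag ∧ P ∉ G.edgeSet}) :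
    (fun t => D t (Col.b i)) ≠ (fun t => D t (Col.c ⟨P.val, P.prop.1⟩)) := by
  obtain ⟨-, -, -, -, -, -, -, -, -, -, hsb, hsc, -⟩ := hD
  intro heq
  obtain ⟨t, hts, htb⟩ := exists_of_fr2_ne_zero ((hsb i P).trans_ne one_ne_zero)
  exact not_and_of_fr2_eq_zero (hsc i P) t ⟨hts, congrFun heq t ▸ htb⟩

lemma injective (hD : Satisfies M G D) {σ : Fin M → Fin M}
    (hσ : ∀ i, ∃ t, D t (Col.o i) = true ∧ D t (Col.v (σ i)) = true) : σ.Injective := by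
  obtain ⟨-, ho2, hv1, -⟩ := hD
  intro i i' h
  obtain ⟨t, hto, htv⟩ := hσ i
  obtain ⟨t', hto', htv'⟩ := hσ i'
  obtain rfl : t = t' := eq_of_fr1_eq_one (hv1 (σ i)) htv (h ▸ htv')
  by_contra hii
  exact not_and_of_fr2_eq_zero (ho2 i i' hii) t ⟨hto, hto'⟩

lemma col_b_eq_col_c_of_mem (hD : Satisfies M G D) {σ : Fin M → Fin M}
    (hσ : ∀ i, ∃ t, D t (Col.o i) = true ∧ D t (Col.v (σ i)) = true) (i : Fin M)
    (P : {P : Sym2 (Fin M) // ¬ P.IsDiag}) (hi : σ i ∈ P.val) (hi' : σ (i + 1) ∈ P.val) :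
    (fun t => D t (Col.b i)) = (fun t => D t (Col.c P)) := by
  have hii' := hD.ne_add_one i
  obtain ⟨ho1, ho2, hv1, -, hb1, hbo, hbo', hc1, hcv, -⟩ := hD
  obtain ⟨t, hto, htv⟩ := hσ i
  obtain ⟨t', hto', htv'⟩ := hσ (i + 1)
  have htt' : t ≠ t' := fun h => not_and_of_fr2_eq_zero (ho2 _ _ hii') t ⟨hto, h ▸ hto'⟩
  refine column_eq_of_fr1_eq_two (hb1 i) (hc1 P) htt' ?_ ?_ ?_ ?_
  · exact apply_eq_true_of_fr2_eq_fr1 ((hbo i).trans (ho1 i).symm) hto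
  · exact apply_eq_true_of_fr2_eq_fr1 ((hbo' i).trans (ho1 (i + 1)).symm) hto'
  · exact apply_eq_true_of_fr2_eq_fr1 ((hcv P _ hi).trans (hv1 _).symm) htv
  · exact apply_eq_true_of_fr2_eq_fr1 ((hcv P _ hi').trans (hv1 _).symm) htv'

end Satisfies

/-- If `D` satisfies the constraints of the Hamiltonian-cycle
reduction for `G` and `σ` is its induced cyclic ordering, then no non-edge
`{j,k}` of `G` ever occurs as a cyclically consecutive pair `{σ i, σ (i+1)}`;
equivalently, the columns `b_i` and `c_P` are never equal as 0–1 vectors for a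
non-edge `P`, so every cyclically consecutive pair of the induced ordering is an
edge of `G`. -/
theorem no_nonedge_is_consecutive (M : ℕ) [NeZero M]
    (G : SimpleGraph (Fin M)) (D : Fin M → Col M G → Bool)
    (hD : Satisfies M G D) (σ : Fin M → Fin M)
    (hσ : ∀ i : Fin M, ∃ t : Fin M, D t (Col.o i) = true ∧ D t (Col.v (σ i)) = true) :
    (∀ j k : Fin M, j ≠ k → ¬ G.Adj j k →
      ¬ ∃ i : Fin M, ({σ i, σ (i + 1)} : Set (Fin M)) = {j, k}) ∧
    (∀ (i : Fin M) (P : {P : Sym2 (Fin M) // ¬ P.IsDiag ∧ P ∉ G.edgeSet}),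
      (fun t : Fin M => D t (Col.b i)) ≠ (fun t : Fin M => D t (Col.c ⟨P.val, P.prop.1⟩))) ∧
    (∀ i : Fin M, G.Adj (σ i) (σ (i + 1))) := by
  have nonedge_not_consecutive : ∀ j k : Fin M, j ≠ k → ¬ G.Adj j k →
      ¬ ∃ i : Fin M, ({σ i, σ (i + 1)} : Set (Fin M)) = {j, k} := by
    rintro j k hjk hjk' ⟨i, hi⟩
    have hmem : ∀ x ∈ ({σ i, σ (i + 1)} : Set (Fin M)), x ∈ s(j, k) := by
      rw [hi]
      simp
    exact hD.col_b_ne_col_c i ⟨s(j, k), by simpa using hjk, by simpa using hjk'⟩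
      (hD.col_b_eq_col_c_of_mem hσ i _ (hmem _ (by simp)) (hmem _ (by simp)))
  refine ⟨nonedge_not_consecutive, hD.col_b_ne_col_c, fun i => ?_⟩
  by_contra hadj
  have hne : σ i ≠ σ (i + 1) := (hD.injective hσ).ne (hD.ne_add_one i)
  exact nonedge_not_consecutive _ _ hne hadj ⟨i, rfl⟩
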